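/- Consider a finite-state Markov decision process with state space S, action space A, transition kernel Π(s'|s,a), and reward ℓ: S → ℝ. For any function λ: S → ℝ, any stationary policy π, and any stationary state distribution d_π of the chain induced by π, the expected stationary reward E_{s∼d_π}[ℓ(s)] is bounded above by sup_{s∈S, a∈A} ( E_{s'∼Π(·|s,a)}[λ(s')] + ℓ(s) − λ(s) ). -/
import Mathlib


theorem mdp_certificate (S A : Type*) [Fintype S] [Fintype A] [Nonempty S] [Nonempty A]
    (K : S → A → S → ℝ) (hK0 : ∀ s a s', 0 ≤ K s a s') (hK1 : ∀ s a, ∑ s', K s a s' = 1)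
    (ℓ lam : S → ℝ)
    (π : S → A → ℝ) (hπ0 : ∀ s a, 0 ≤ π s a) (hπ1 : ∀ s, ∑ a, π s a = 1)
    (d : S → ℝ) (hd0 : ∀ s, 0 ≤ d s) (hd1 : ∑ s, d s = 1)
    (hstat : ∀ s', ∑ s, ∑ a, d s * π s a * K s a s' = d s') :
    ∑ s, d s * ℓ s ≤
      ⨆ p : S × A, ((∑ s', K p.1 p.2 s' * lam s') + ℓ p.1 - lam p.1) := by
  set f : S × A → ℝ := fun p => (∑ s', K p.1 p.2 s' * lam s') + ℓ p.1 - lam p.1 with hf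
  have hb : BddAbove (Set.range f) := (Set.finite_range f).bddAbove
  have hle : ∀ s a, f (s, a) ≤ ⨆ p : S × A, f p := fun s a => le_ciSup hb (s, a)
  have h2 : ∑ s, ∑ a, d s * π s a * ∑ s', K s a s' * lam s'
      = ∑ s', d s' * lam s' := by
    have e1 : ∀ s a, d s * π s a * ∑ s', K s a s' * lam s'
        = ∑ s', d s * π s a * K s a s' * lam s' := by
      intro s a; rw [Finset.mul_sum]; exact Finset.sum_congr rfl fun s' _ => by ring
    simp_rw [e1]
    rw [Finset.sum_congr rfl fun s _ => (Finset.sum_comm :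
      ∑ a : A, ∑ s' : S, d s * π s a * K s a s' * lam s'
        = ∑ s' : S, ∑ a : A, d s * π s a * K s a s' * lam s'), Finset.sum_comm]
    refine Finset.sum_congr rfl fun s' _ => ?_
    rw [← hstat s', Finset.sum_mul]
    exact Finset.sum_congr rfl fun s _ => by rw [Finset.sum_mul]
  have key : ∑ s, d s * ℓ s = ∑ s, ∑ a, d s * π s a * f (s, a) := by
    have h1 : ∑ s, ∑ a, d s * π s a * f (s, a)
        = (∑ s, ∑ a, d s * π s a * ∑ s', K s a s' * lam s')
          + ∑ s, ∑ a, d s * π s a * (ℓ s - lam s) := by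
      rw [← Finset.sum_add_distrib]
      refine Finset.sum_congr rfl fun s _ => ?_
      rw [← Finset.sum_add_distrib]
      refine Finset.sum_congr rfl fun a _ => ?_
      simp only [hf]; ring
    have h3 : ∑ s, ∑ a, d s * π s a * (ℓ s - lam s) = ∑ s, d s * (ℓ s - lam s) := by
      refine Finset.sum_congr rfl fun s _ => ?_
      rw [← Finset.sum_mul, ← Finset.mul_sum, hπ1, mul_one]
    rw [h1, h2, h3]
    rw [← Finset.sum_add_distrib]
    exact (Finset.sum_congr rfl fun s _ => by ring).symm
  rw [key]
  calc ∑ s, ∑ a, d s * π s a * f (s, a)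
      ≤ ∑ s, ∑ a, d s * π s a * (⨆ p : S × A, f p) := by
        refine Finset.sum_le_sum fun s _ => Finset.sum_le_sum fun a _ => ?_
        exact mul_le_mul_of_nonneg_left (hle s a) (mul_nonneg (hd0 s) (hπ0 s a))
    _ = ⨆ p : S × A, f p := by
        have e : ∀ s, ∑ a, d s * π s a * (⨆ p : S × A, f p)
            = d s * (⨆ p : S × A, f p) := fun s => by
          rw [← Finset.sum_mul, ← Finset.mul_sum, hπ1, mul_one]
        rw [Finset.sum_congr rfl fun s _ => e s, ← Finset.sum_mul, hd1, one_mul]
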